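/- For all real numbers μ > 1, T ∈ (0,1) and y ≥ 0, the equation −μ·(μ + T) + (1 − T²) = √(μ²−1)·(μ + T)·tanh(y) has no solution: indeed the left-hand side satisfies −μ(μ+T) + 1 − T² ≤ −T − T² < 0, while the right-hand side is ≥ 0. Consequently, for γ = 0 and d = 0 the linearisation L_pin about the unique pinned fluxon with half-length L > 0 has no eigenvalue Λ > 0. -/

import Mathlib

/-!
On the tails `|x| ≥ L` a fluxon with `d = γ = 0` is a pendulum separatrix, `φ'² = 2 - 2 cos φ`,
and on `[-L, L]` it is affine. Since `|φ'| ≤ |φ - φ(x₀)|` near a rest point `x₀` of the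
separatrix, Gronwall's inequality shows that `φ'` never vanishes; hence `φ' > 0`,
`φ(-L) + φ(L) = 2π` and `sin φ(-L) ≥ 0 ≥ sin φ(L)`.

For an eigenfunction `ψ` with `Λ > 0`, the Wronskian `V = ψ'φ' - ψφ''` of `ψ` with the
translation mode `φ'` satisfies `V' = Λψφ'` away from `±L`, and the signs of `sin φ(±L)` make
its jumps at `±L` upward wherever `ψ ≥ 0`. So `V` increases across any interval on which
`ψ > 0`, from a value `≥ 0` at its left end (a zero of `ψ`, or `-∞`) to a value `≤ 0` at its
right end. Thus `V = 0` on `{ψ > 0}`, contradicting `V' > 0` there: `ψ ≤ 0`, and likewise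
`-ψ ≤ 0`.
-/

open Real Filter Topology

/-- The piecewise-constant Josephson tunneling critical current:
`D(x) = d` for `|x| < L` and `D(x) = 1` for `|x| > L`. -/
noncomputable def Dfun (L d : ℝ) (x : ℝ) : ℝ := if |x| < L then d else 1

/-- A pinned fluxon for parameters `(L, d, γ)`. -/
def IsPinnedFluxon (L d γ : ℝ) (φ : ℝ → ℝ) : Prop :=
  ContDiff ℝ 1 φ ∧
  (∀ x : ℝ, x ≠ -L → x ≠ L →
    ∃ φ'' : ℝ, HasDerivAt (deriv φ) φ'' x ∧
      φ'' - Dfun L d x * Real.sin (φ x) + γ = 0) ∧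
  Tendsto φ atBot (𝓝 (Real.arcsin γ)) ∧
  Tendsto φ atTop (𝓝 (Real.arcsin γ + 2 * π)) ∧
  Tendsto (deriv φ) atBot (𝓝 0) ∧
  Tendsto (deriv φ) atTop (𝓝 0)

/-- `ψ` is an eigenfunction of the linearisation about `φpin` with eigenvalue `Λ`. -/
def IsEigenfun (L d γ : ℝ) (φpin : ℝ → ℝ) (Λ : ℝ) (ψ : ℝ → ℝ) : Prop :=
  ψ ≠ 0 ∧ ContDiff ℝ 1 ψ ∧
  (∀ x : ℝ, x ≠ -L → x ≠ L →
    ∃ ψ'' : ℝ, HasDerivAt (deriv ψ) ψ'' x ∧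
      ψ'' - Dfun L d x * Real.cos (φpin x) * ψ x = Λ * ψ x) ∧
  Tendsto ψ atBot (𝓝 0) ∧ Tendsto ψ atTop (𝓝 0) ∧
  Tendsto (deriv ψ) atBot (𝓝 0) ∧ Tendsto (deriv ψ) atTop (𝓝 0)

/-- `Λ` is an eigenvalue of the linearisation `L_pin` about the pinned fluxon `φpin`. -/
def IsEigenvalue (L d γ : ℝ) (φpin : ℝ → ℝ) (Λ : ℝ) : Prop :=
  ∃ ψ : ℝ → ℝ, IsEigenfun L d γ φpin Λ ψ

open Set

theorem matching_equation_no_solution {μ T y : ℝ} (hμ : 1 < μ) (hT : T ∈ Ioo (0 : ℝ) 1)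
    (hy : 0 ≤ y) :
    -μ * (μ + T) + (1 - T ^ 2) ≤ -T - T ^ 2 ∧ -T - T ^ 2 < 0 ∧
      0 ≤ √(μ ^ 2 - 1) * (μ + T) * tanh y ∧
      -μ * (μ + T) + (1 - T ^ 2) ≠ √(μ ^ 2 - 1) * (μ + T) * tanh y := by
  obtain ⟨hT₀, hT₁⟩ := hT
  have hlhs : -μ * (μ + T) + (1 - T ^ 2) ≤ -T - T ^ 2 := by nlinarith
  have hneg : -T - T ^ 2 < 0 := by nlinarith
  have htanh : 0 ≤ tanh y := by
    rw [tanh_eq_sinh_div_cosh]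
    exact div_nonneg (sinh_nonneg_iff.2 hy) (cosh_pos y).le
  have hrhs : 0 ≤ √(μ ^ 2 - 1) * (μ + T) * tanh y := by positivity
  exact ⟨hlhs, hneg, hrhs, (hlhs.trans_lt hneg |>.trans_le hrhs).ne⟩

theorem eq_of_hasDerivAt_eq_zero {f : ℝ → ℝ} {a b : ℝ} (hab : a ≤ b)
    (hf : ContinuousOn f (Icc a b)) (hd : ∀ x ∈ Ioo a b, HasDerivAt f 0 x) : f a = f b := by
  rcases hab.eq_or_lt with rfl | hab
  · rfl
  obtain ⟨c, -, hc⟩ := exists_hasDerivAt_eq_slope f (fun _ => 0) hab hf hd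
  rw [eq_comm, div_eq_zero_iff, sub_eq_zero, sub_eq_zero] at hc
  exact (hc.resolve_right hab.ne').symm

theorem eq_of_tendsto_atTop_of_hasDerivAt_eq_zero {f : ℝ → ℝ} {a l : ℝ} (hf : Continuous f)
    (hd : ∀ x, a < x → HasDerivAt f 0 x) (hl : Tendsto f atTop (𝓝 l)) {x : ℝ} (hx : a ≤ x) :
    f x = l := by
  refine tendsto_nhds_unique (tendsto_const_nhds.congr' ?_) hl
  filter_upwards [eventually_ge_atTop x] with y hy
  exact eq_of_hasDerivAt_eq_zero hy hf.continuousOn fun t ht => hd t (hx.trans_lt ht.1)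

theorem eq_of_tendsto_atBot_of_hasDerivAt_eq_zero {f : ℝ → ℝ} {a l : ℝ} (hf : Continuous f)
    (hd : ∀ x, x < a → HasDerivAt f 0 x) (hl : Tendsto f atBot (𝓝 l)) {x : ℝ} (hx : x ≤ a) :
    f x = l := by
  refine tendsto_nhds_unique (tendsto_const_nhds.congr' ?_) hl
  filter_upwards [eventually_le_atBot x] with y hy
  exact (eq_of_hasDerivAt_eq_zero hy hf.continuousOn fun t ht => hd t (ht.2.trans_le hx)).symm

theorem eq_of_abs_deriv_le_abs_sub {f : ℝ → ℝ} (hf : Differentiable ℝ f) {a b : ℝ} (hab : a ≤ b)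
    (hbound : ∀ t ∈ Ico a b, |deriv f t| ≤ |f t - f a|) : f b = f a := by
  have h := norm_le_gronwallBound_of_norm_deriv_right_le (f := fun t => f t - f a) (δ := 0)
    (K := 1) (ε := 0) (hf.continuous.sub continuous_const).continuousOn
    (fun t _ => ((hf t).hasDerivAt.sub_const (f a)).hasDerivWithinAt) (by simp)
    (fun t ht => by simpa using hbound t ht) b ⟨hab, le_rfl⟩
  rwa [gronwallBound_ε0_δ0, norm_le_zero_iff, sub_eq_zero] at h

theorem eq_of_abs_deriv_le_abs_sub_of_ordConnected {f : ℝ → ℝ} (hf : Differentiable ℝ f)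
    {s : Set ℝ} (hs : s.OrdConnected) {x₀ : ℝ} (hx₀ : x₀ ∈ s)
    (hbound : ∀ t ∈ s, |deriv f t| ≤ |f t - f x₀|) {x : ℝ} (hx : x ∈ s) : f x = f x₀ := by
  rcases le_total x₀ x with h | h
  · exact eq_of_abs_deriv_le_abs_sub hf h fun t ht =>
      hbound t (hs.out hx₀ hx (Ico_subset_Icc_self ht))
  · have hg : Differentiable ℝ fun t => f (-t) := hf.comp differentiable_neg
    have := eq_of_abs_deriv_le_abs_sub hg (neg_le_neg h) fun t ht => by
      rw [deriv_comp_neg, abs_neg, neg_neg]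
      exact hbound _ (hs.out hx hx₀ ⟨by linarith [ht.2], by linarith [ht.1]⟩)
    simpa using this

theorem two_sub_two_cos_le_sq_sub {θ c : ℝ} (hc : cos c = 1) : 2 - 2 * cos θ ≤ (θ - c) ^ 2 := by
  have hs : sin c = 0 := by nlinarith [sin_sq_add_cos_sq c]
  have := one_sub_sq_div_two_le_cos (x := θ - c)
  rw [cos_sub, hc, hs] at this
  linarith

theorem eq_and_deriv_eq_zero_of_deriv_sq_eq_two_sub_two_cos {f : ℝ → ℝ}
    (hf : Differentiable ℝ f) {s : Set ℝ} (hs : s.OrdConnected)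
    (hE : ∀ t ∈ s, deriv f t ^ 2 = 2 - 2 * cos (f t)) {x₀ : ℝ} (hx₀ : x₀ ∈ s)
    (h0 : deriv f x₀ = 0) {x : ℝ} (hx : x ∈ s) : f x = f x₀ ∧ deriv f x = 0 := by
  have hc : cos (f x₀) = 1 := by nlinarith [hE x₀ hx₀]
  have hfx : f x = f x₀ :=
    eq_of_abs_deriv_le_abs_sub_of_ordConnected hf hs hx₀ (fun t ht => by
      rw [← sq_le_sq, hE t ht]
      exact two_sub_two_cos_le_sq_sub hc) hx
  refine ⟨hfx, pow_eq_zero_iff two_ne_zero |>.1 ?_⟩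
  rw [hE x hx, hfx, hc]
  ring

theorem add_eq_two_pi_of_cos_eq {a b : ℝ} (ha : 0 < a) (hab : a < b) (hb : b < 2 * π)
    (h : cos a = cos b) : a + b = 2 * π := by
  obtain ⟨k, hk | hk⟩ := cos_eq_cos_iff.1 h
  · have h₀ : (0 : ℝ) < k := by nlinarith [pi_pos]
    have h₁ : (k : ℝ) < 1 := by nlinarith [pi_pos]
    exact absurd (⟨by exact_mod_cast h₀, by exact_mod_cast h₁⟩ : 0 < k ∧ k < 1) (by omega)
  · have h₀ : (0 : ℝ) < k := by nlinarith [pi_pos]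
    have h₁ : (k : ℝ) < 2 := by nlinarith [pi_pos]
    obtain rfl : k = 1 := by
      have : 0 < k ∧ k < 2 := ⟨by exact_mod_cast h₀, by exact_mod_cast h₁⟩
      omega
    push_cast at hk
    linarith

theorem MonotoneOn.of_inter_Iic_of_inter_Ici {α β : Type*} [LinearOrder α] [Preorder β]
    {f : α → β} {s : Set α} {c : α} (hs : s.OrdConnected) (h₁ : MonotoneOn f (s ∩ Iic c))
    (h₂ : MonotoneOn f (s ∩ Ici c)) : MonotoneOn f s := by
  intro x hx y hy hxy
  rcases le_total y c with hyc | hcy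
  · exact h₁ ⟨hx, hxy.trans hyc⟩ ⟨hy, hyc⟩ hxy
  rcases le_total x c with hxc | hcx
  · have hc : c ∈ s := hs.out hx hy ⟨hxc, hcy⟩
    exact (h₁ ⟨hx, hxc⟩ ⟨hc, le_rfl⟩ hxc).trans (h₂ ⟨hc, le_rfl⟩ ⟨hy, hcy⟩ hcy)
  · exact h₂ ⟨hx, hcx⟩ ⟨hy, hcx.trans hxy⟩ hxy

theorem HasDerivAt.nonpos_of_eq_zero_of_nonneg_left {f : ℝ → ℝ} {f' a b : ℝ}
    (hf : HasDerivAt f f' b) (hb : f b = 0) (hab : a < b) (hnn : ∀ t ∈ Ioo a b, 0 ≤ f t) :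
    f' ≤ 0 := by
  refine le_of_tendsto hf.tendsto_slope_zero_left ?_
  filter_upwards [Ioo_mem_nhdsLT (sub_neg.2 hab)] with t ht
  rw [hb, sub_zero, smul_eq_mul]
  exact mul_nonpos_of_nonpos_of_nonneg (inv_nonpos.2 ht.2.le)
    (hnn _ ⟨by linarith [ht.1], by linarith [ht.2]⟩)

theorem nonpos_of_pos_of_monotone_where_nonneg {ψ V : ℝ → ℝ} (hψ : Continuous ψ)
    (hmono : ∀ a b, a ≤ b → (∀ t ∈ Icc a b, 0 ≤ ψ t) → V a ≤ V b)
    (hzero : ∀ a b, a < b → ψ b = 0 → (∀ t ∈ Ioo a b, 0 ≤ ψ t) → V b ≤ 0)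
    (hlim : Tendsto V atTop (𝓝 0)) {x : ℝ} (hx : 0 < ψ x) : V x ≤ 0 := by
  have hpos : ∀ b, (∀ t ∈ Icc x b, ψ t ≠ 0) → ∀ t ∈ Icc x b, 0 < ψ t := by
    intro b hne t ht
    by_contra! h
    obtain ⟨c, hc, hc0⟩ := intermediate_value_Icc' ht.1 hψ.continuousOn ⟨h, hx.le⟩
    exact hne c ⟨hc.1, hc.2.trans ht.2⟩ hc0
  by_cases hz : ∃ b, x ≤ b ∧ ψ b = 0
  · have hbdd : BddBelow {b | x ≤ b ∧ ψ b = 0} := ⟨x, fun b hb => hb.1⟩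
    have hβ : sInf {b | x ≤ b ∧ ψ b = 0} ∈ {b | x ≤ b ∧ ψ b = 0} :=
      (isClosed_Ici.inter (isClosed_eq hψ continuous_const)).csInf_mem hz hbdd
    set β := sInf {b | x ≤ b ∧ ψ b = 0}
    have hxβ : x < β := hβ.1.lt_of_ne (by rintro h; rw [h, hβ.2] at hx; exact hx.false)
    have hnn : ∀ t ∈ Icc x β, 0 ≤ ψ t := by
      intro t ht
      rcases ht.2.eq_or_lt with rfl | htβ
      · exact hβ.2.ge
      refine (hpos t (fun c hc hc0 => ?_) t ⟨ht.1, le_rfl⟩).le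
      exact (csInf_le hbdd ⟨hc.1, hc0⟩).not_gt (hc.2.trans_lt htβ)
    exact (hmono x β hxβ.le hnn).trans
      (hzero x β hxβ hβ.2 fun t ht => hnn t (Ioo_subset_Icc_self ht))
  · push Not at hz
    refine ge_of_tendsto hlim ?_
    filter_upwards [eventually_ge_atTop x] with b hb
    exact hmono x b hb fun t ht => (hpos b (fun t ht => hz t ht.1) t ht).le

theorem Dfun_of_abs_lt {L d x : ℝ} (h : |x| < L) : Dfun L d x = d := if_pos h

theorem Dfun_of_le_abs {L d x : ℝ} (h : L ≤ |x|) : Dfun L d x = 1 := if_neg h.not_gt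

theorem Dfun_eventuallyEq {L d x : ℝ} (hx : |x| ≠ L) : Dfun L d =ᶠ[𝓝 x] fun _ => Dfun L d x := by
  rcases hx.lt_or_gt with h | h
  · filter_upwards [(isOpen_lt continuous_abs continuous_const).mem_nhds h] with t ht
    rw [Dfun_of_abs_lt ht, Dfun_of_abs_lt h]
  · filter_upwards [(isOpen_lt continuous_const continuous_abs).mem_nhds h] with t ht
    rw [Dfun_of_le_abs ht.le, Dfun_of_le_abs h.le]

theorem abs_ne_of_ne_of_ne {x L : ℝ} (h₁ : x ≠ -L) (h₂ : x ≠ L) : |x| ≠ L := by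
  intro h
  rcases (abs_eq (h ▸ abs_nonneg x)).1 h with h | h <;> contradiction

theorem ne_and_ne_of_abs_ne {x L : ℝ} (hL : 0 ≤ L) (h : |x| ≠ L) : x ≠ -L ∧ x ≠ L := by
  constructor <;> rintro rfl <;> simp [abs_of_nonneg hL] at h

namespace IsPinnedFluxon

variable {L d γ : ℝ} {φ : ℝ → ℝ}

theorem hasDerivAt_deriv (hφ : IsPinnedFluxon L d γ φ) {x : ℝ} (h₁ : x ≠ -L) (h₂ : x ≠ L) :
    HasDerivAt (deriv φ) (Dfun L d x * sin (φ x) - γ) x := by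
  obtain ⟨φ'', h, he⟩ := hφ.2.1 x h₁ h₂
  rwa [show Dfun L d x * sin (φ x) - γ = φ'' by linarith]

theorem hasDerivAt_energy (hφ : IsPinnedFluxon L d 0 φ) (hL : 0 ≤ L) {x : ℝ} (hx : L < |x|) :
    HasDerivAt (fun t => deriv φ t ^ 2 + 2 * cos (φ t)) 0 x := by
  obtain ⟨h₁, h₂⟩ := ne_and_ne_of_abs_ne hL hx.ne'
  have hφ'' := hφ.hasDerivAt_deriv h₁ h₂
  rw [Dfun_of_le_abs hx.le, one_mul, sub_zero] at hφ''
  have hφ' := (hφ.1.differentiable one_ne_zero x).hasDerivAt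
  exact ((hφ''.fun_pow 2).fun_add (((hasDerivAt_cos (φ x)).comp x hφ').const_mul 2)).congr_deriv
    (by push_cast; ring)

theorem deriv_sq_eq_two_sub_two_cos (hφ : IsPinnedFluxon L d 0 φ) (hL : 0 ≤ L) {x : ℝ}
    (hx : L ≤ |x|) : deriv φ x ^ 2 = 2 - 2 * cos (φ x) := by
  have hE : Continuous fun t => deriv φ t ^ 2 + 2 * cos (φ t) := by
    have := hφ.1.continuous_deriv_one
    have := hφ.1.continuous
    fun_prop
  obtain ⟨-, -, hbot, htop, h'bot, h'top⟩ := id hφ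
  rw [arcsin_zero] at hbot htop
  suffices deriv φ x ^ 2 + 2 * cos (φ x) = 2 by linarith
  rcases le_abs'.1 hx with h | h
  · refine eq_of_tendsto_atBot_of_hasDerivAt_eq_zero hE
      (fun t ht => hφ.hasDerivAt_energy hL ?_) ?_ h
    · rw [abs_of_neg (by linarith)]; linarith
    · simpa using (h'bot.pow 2).add (((continuous_cos.tendsto _).comp hbot).const_mul 2)
  · refine eq_of_tendsto_atTop_of_hasDerivAt_eq_zero hE
      (fun t ht => hφ.hasDerivAt_energy hL ?_) ?_ h
    · rw [abs_of_pos (by linarith)]; exact ht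
    · simpa using (h'top.pow 2).add (((continuous_cos.tendsto _).comp htop).const_mul 2)

theorem deriv_eq_deriv_neg (hφ : IsPinnedFluxon L 0 0 φ) {x : ℝ} (hx : x ∈ Icc (-L) L) :
    deriv φ x = deriv φ (-L) := by
  refine (eq_of_hasDerivAt_eq_zero hx.1 hφ.1.continuous_deriv_one.continuousOn
    fun t ht => ?_).symm
  have ht' : |t| < L := abs_lt.2 ⟨ht.1, ht.2.trans_le hx.2⟩
  obtain ⟨h₁, h₂⟩ := ne_and_ne_of_abs_ne ((abs_nonneg t).trans ht'.le) ht'.ne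
  have h := hφ.hasDerivAt_deriv h₁ h₂
  rwa [Dfun_of_abs_lt ht', zero_mul, sub_zero] at h

theorem eq_and_deriv_eq_zero_of_deriv_eq_zero (hφ : IsPinnedFluxon L d 0 φ) (hL : 0 ≤ L)
    {s : Set ℝ} (hs : s.OrdConnected) (hsL : ∀ t ∈ s, L ≤ |t|) ⦃x₀ : ℝ⦄ (hx₀ : x₀ ∈ s)
    (h0 : deriv φ x₀ = 0) ⦃y : ℝ⦄ (hy : y ∈ s) : φ y = φ x₀ ∧ deriv φ y = 0 :=
  eq_and_deriv_eq_zero_of_deriv_sq_eq_two_sub_two_cos (hφ.1.differentiable one_ne_zero) hs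
    (fun t ht => hφ.deriv_sq_eq_two_sub_two_cos hL (hsL t ht)) hx₀ h0 hy

theorem deriv_ne_zero (hφ : IsPinnedFluxon L 0 0 φ) (hL : 0 ≤ L) (x : ℝ) : deriv φ x ≠ 0 := by
  intro hx
  have hl : ∀ t ∈ Iic (-L), L ≤ |t| := fun t ht => by
    rw [abs_of_nonpos (by linarith [ht.out])]
    linarith [ht.out]
  have hr : ∀ t ∈ Ici L, L ≤ |t| := fun t ht => by
    rw [abs_of_nonneg (by linarith [ht.out])]
    exact ht
  have hrestl := hφ.eq_and_deriv_eq_zero_of_deriv_eq_zero hL ordConnected_Iic hl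
  have hrestr := hφ.eq_and_deriv_eq_zero_of_deriv_eq_zero hL ordConnected_Ici hr
  have hmid := fun t ht => hφ.deriv_eq_deriv_neg (x := t) ht
  have hLL : deriv φ L = deriv φ (-L) := hmid L ⟨by linarith, le_rfl⟩
  have h₀ : deriv φ (-L) = 0 := by
    rcases le_or_gt x (-L) with h | h
    · exact (hrestl h hx self_mem_Iic).2
    rcases le_or_gt x L with h' | h'
    · rw [← hmid x ⟨h.le, h'⟩, hx]
    · rw [← hLL]
      exact (hrestr h'.le hx self_mem_Ici).2
  have hdiff : Differentiable ℝ φ := hφ.1.differentiable one_ne_zero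
  obtain ⟨-, -, hbot, htop, -, -⟩ := hφ
  rw [arcsin_zero] at hbot htop
  have hleft : φ (-L) = 0 := by
    refine tendsto_nhds_unique (tendsto_const_nhds.congr' ?_) hbot
    filter_upwards [eventually_le_atBot (-L)] with y hy
    exact (hrestl self_mem_Iic h₀ hy).1.symm
  have hright : φ L = 2 * π := by
    refine tendsto_nhds_unique (tendsto_const_nhds.congr' ?_) (by simpa using htop)
    filter_upwards [eventually_ge_atTop L] with y hy
    exact (hrestr self_mem_Ici (hLL.trans h₀) hy).1.symm
  have hflat : φ (-L) = φ L := eq_of_hasDerivAt_eq_zero (by linarith) hdiff.continuous.continuousOn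
    fun t ht => h₀ ▸ hmid t ⟨ht.1.le, ht.2.le⟩ ▸ (hdiff t).hasDerivAt
  linarith [pi_pos]

theorem deriv_pos (hφ : IsPinnedFluxon L 0 0 φ) (hL : 0 ≤ L) (x : ℝ) : 0 < deriv φ x := by
  by_contra! hx
  have hneg : ∀ y, deriv φ y ≤ 0 := fun y => by
    by_contra! hy
    obtain ⟨z, hz⟩ := intermediate_value_univ x y hφ.1.continuous_deriv_one ⟨hx, hy.le⟩
    exact hφ.deriv_ne_zero hL z hz
  have hanti : Antitone φ := antitone_of_deriv_nonpos (hφ.1.differentiable one_ne_zero) hneg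
  obtain ⟨-, -, hbot, htop, -, -⟩ := hφ
  rw [arcsin_zero] at hbot htop
  linarith [hanti.ge_of_tendsto hbot 0, hanti.le_of_tendsto htop 0, pi_pos]

theorem mem_Ioo (hφ : IsPinnedFluxon L 0 0 φ) (hL : 0 ≤ L) (x : ℝ) : φ x ∈ Ioo 0 (2 * π) := by
  have hmono : StrictMono φ := strictMono_of_deriv_pos (hφ.deriv_pos hL)
  obtain ⟨-, -, hbot, htop, -, -⟩ := hφ
  rw [arcsin_zero, zero_add] at htop
  rw [arcsin_zero] at hbot
  exact ⟨(hmono.monotone.le_of_tendsto hbot (x - 1)).trans_lt (hmono (by linarith)),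
    (hmono (by linarith : x < x + 1)).trans_le (hmono.monotone.ge_of_tendsto htop (x + 1))⟩

theorem apply_neg_add_apply (hφ : IsPinnedFluxon L 0 0 φ) (hL : 0 < L) :
    φ (-L) + φ L = 2 * π := by
  have hcos : cos (φ (-L)) = cos (φ L) := by
    have hl := hφ.deriv_sq_eq_two_sub_two_cos hL.le (x := -L) (by rw [abs_neg, abs_of_pos hL])
    have hr := hφ.deriv_sq_eq_two_sub_two_cos hL.le (x := L) (abs_of_pos hL).ge
    rw [hφ.deriv_eq_deriv_neg ⟨by linarith, le_rfl⟩] at hr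
    linarith
  exact add_eq_two_pi_of_cos_eq (hφ.mem_Ioo hL.le _).1
    (strictMono_of_deriv_pos (hφ.deriv_pos hL.le) (by linarith)) (hφ.mem_Ioo hL.le _).2 hcos

theorem sin_apply_neg_nonneg (hφ : IsPinnedFluxon L 0 0 φ) (hL : 0 < L) : 0 ≤ sin (φ (-L)) := by
  have hlt : φ (-L) < φ L := strictMono_of_deriv_pos (hφ.deriv_pos hL.le) (by linarith)
  exact sin_nonneg_of_nonneg_of_le_pi (hφ.mem_Ioo hL.le _).1.le
    (by linarith [hφ.apply_neg_add_apply hL])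

theorem sin_apply_nonpos (hφ : IsPinnedFluxon L 0 0 φ) (hL : 0 < L) : sin (φ L) ≤ 0 := by
  rw [show φ L = 2 * π - φ (-L) by linarith [hφ.apply_neg_add_apply hL], sin_two_pi_sub]
  linarith [hφ.sin_apply_neg_nonneg hL]

end IsPinnedFluxon

theorem IsEigenfun.hasDerivAt_deriv {L d γ Λ : ℝ} {φ ψ : ℝ → ℝ} (hψ : IsEigenfun L d γ φ Λ ψ)
    {x : ℝ} (h₁ : x ≠ -L) (h₂ : x ≠ L) :
    HasDerivAt (deriv ψ) ((Λ + Dfun L d x * cos (φ x)) * ψ x) x := by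
  obtain ⟨ψ'', h, he⟩ := hψ.2.2.1 x h₁ h₂
  rwa [show (Λ + Dfun L d x * cos (φ x)) * ψ x = ψ'' by linarith]

theorem IsEigenfun.neg {L d γ Λ : ℝ} {φ ψ : ℝ → ℝ} (hψ : IsEigenfun L d γ φ Λ ψ) :
    IsEigenfun L d γ φ Λ (-ψ) := by
  obtain ⟨hne, hC, hode, hbot, htop, h'bot, h'top⟩ := hψ
  refine ⟨neg_ne_zero.2 hne, hC.neg, fun x h₁ h₂ => ?_, by convert hbot.neg <;> simp,
    by convert htop.neg <;> simp, ?_, ?_⟩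
  · obtain ⟨ψ'', h, he⟩ := hode x h₁ h₂
    refine ⟨-ψ'', by rw [deriv.neg']; exact h.neg, ?_⟩
    simp only [Pi.neg_apply]
    linarith
  · rw [deriv.neg']; simpa using h'bot.neg
  · rw [deriv.neg']; simpa using h'top.neg

/-- The Wronskian `ψ'φ' - ψφ''` of `ψ` with the translation mode `φ'`, with `φ''` replaced by
`D sin φ`; this makes it defined at `±L`, where it jumps. -/
noncomputable def wronskian (L : ℝ) (φ ψ : ℝ → ℝ) (x : ℝ) : ℝ :=
  deriv ψ x * deriv φ x - ψ x * (Dfun L 0 x * sin (φ x))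

section Wronskian

variable {L Λ : ℝ} {φ ψ : ℝ → ℝ}

theorem wronskian_of_eq_zero {x : ℝ} (hx : ψ x = 0) :
    wronskian L φ ψ x = deriv ψ x * deriv φ x := by
  simp [wronskian, hx]

theorem hasDerivAt_wronskian (hφ : IsPinnedFluxon L 0 0 φ) (hψ : IsEigenfun L 0 0 φ Λ ψ) {x : ℝ}
    (h₁ : x ≠ -L) (h₂ : x ≠ L) : HasDerivAt (wronskian L φ ψ) (Λ * ψ x * deriv φ x) x := by
  have hφ' := (hφ.1.differentiable one_ne_zero x).hasDerivAt
  have hψ' := (hψ.2.1.differentiable one_ne_zero x).hasDerivAt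
  have h := ((hψ.hasDerivAt_deriv h₁ h₂).mul (hφ.hasDerivAt_deriv h₁ h₂)).sub
    (hψ'.mul (((hasDerivAt_sin _).comp x hφ').const_mul (Dfun L 0 x)))
  refine (h.congr_deriv (by simp only [Function.comp_apply]; ring)).congr_of_eventuallyEq ?_
  filter_upwards [Dfun_eventuallyEq (d := 0) (abs_ne_of_ne_of_ne h₁ h₂)] with t ht
  simp [wronskian, ht]

theorem continuousOn_wronskian (hφ : ContDiff ℝ 1 φ) (hψ : ContDiff ℝ 1 ψ) :
    ContinuousOn (wronskian L φ ψ) {t | L ≤ |t|} := by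
  have : Continuous fun t => deriv ψ t * deriv φ t - ψ t * sin (φ t) := by
    have := hφ.continuous_deriv_one
    have := hψ.continuous_deriv_one
    have := hφ.continuous
    have := hψ.continuous
    fun_prop
  exact this.continuousOn.congr fun t ht => by simp [wronskian, Dfun_of_le_abs ht.out]

theorem tendsto_wronskian {l : Filter ℝ} (hψ : Tendsto ψ l (𝓝 0))
    (hψ' : Tendsto (deriv ψ) l (𝓝 0)) (hφ' : Tendsto (deriv φ) l (𝓝 0)) :
    Tendsto (wronskian L φ ψ) l (𝓝 0) := by
  have hbdd : IsBoundedUnder (· ≤ ·) l (norm ∘ fun t => Dfun L 0 t * sin (φ t)) := by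
    refine isBoundedUnder_of ⟨1, fun t => ?_⟩
    simp only [Function.comp_apply, Dfun]
    split_ifs <;> simp [abs_sin_le_one]
  unfold wronskian
  simpa using (hψ'.mul hφ').sub (hψ.zero_mul_isBoundedUnder_le hbdd)

theorem monotoneOn_wronskian_of_interior (hL : 0 ≤ L) (hφ : IsPinnedFluxon L 0 0 φ)
    (hψ : IsEigenfun L 0 0 φ Λ ψ) (hΛ : 0 ≤ Λ) {s : Set ℝ} (hs : s.OrdConnected)
    (hcont : ContinuousOn (wronskian L φ ψ) s) (hint : ∀ t ∈ interior s, t ≠ -L ∧ t ≠ L)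
    (hψs : ∀ t ∈ s, 0 ≤ ψ t) : MonotoneOn (wronskian L φ ψ) s :=
  monotoneOn_of_hasDerivWithinAt_nonneg hs.convex hcont
    (fun t ht => (hasDerivAt_wronskian hφ hψ (hint t ht).1 (hint t ht).2).hasDerivWithinAt)
    (fun t ht => mul_nonneg (mul_nonneg hΛ (hψs t (interior_subset ht))) (hφ.deriv_pos hL t).le)

/-- On `[-L, L]` the Wronskian equals `ψ'φ'` except at the ends, where the signs of `sin φ(±L)`
put it below `ψ'φ'` at `-L` and above it at `L`. -/
theorem monotoneOn_wronskian_of_subset_Icc (hL : 0 < L) (hφ : IsPinnedFluxon L 0 0 φ)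
    (hψ : IsEigenfun L 0 0 φ Λ ψ) (hΛ : 0 ≤ Λ) {s : Set ℝ} (hs : s.OrdConnected)
    (hsub : s ⊆ Icc (-L) L) (hψs : ∀ t ∈ s, 0 ≤ ψ t) : MonotoneOn (wronskian L φ ψ) s := by
  set W : ℝ → ℝ := fun t => deriv ψ t * deriv φ t
  have hWV : ∀ t, |t| < L → wronskian L φ ψ t = W t := fun t ht => by
    simp [wronskian, W, Dfun_of_abs_lt ht]
  have hW : MonotoneOn W s := by
    have hcont : Continuous W := by
      have := hφ.1.continuous_deriv_one
      have := hψ.2.1.continuous_deriv_one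
      fun_prop
    refine monotoneOn_of_hasDerivWithinAt_nonneg hs.convex hcont.continuousOn
      (f' := fun t => Λ * ψ t * deriv φ t) (fun t ht => ?_)
      (fun t ht => mul_nonneg (mul_nonneg hΛ (hψs t (interior_subset ht)))
        (hφ.deriv_pos hL.le t).le)
    have ht' : |t| < L := by
      have := interior_mono hsub ht
      rw [interior_Icc] at this
      exact abs_lt.2 this
    obtain ⟨h₁, h₂⟩ := ne_and_ne_of_abs_ne hL.le ht'.ne
    refine ((hasDerivAt_wronskian hφ hψ h₁ h₂).congr_of_eventuallyEq ?_).hasDerivWithinAt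
    filter_upwards [(isOpen_lt continuous_abs continuous_const).mem_nhds ht'] with u hu
    exact (hWV u hu).symm
  have hleft : ∀ t ∈ s, t ≠ L → wronskian L φ ψ t ≤ W t := by
    intro t ht htL
    rcases (hsub ht).1.eq_or_lt with rfl | h
    · have : 0 ≤ ψ (-L) * sin (φ (-L)) := mul_nonneg (hψs _ ht) (hφ.sin_apply_neg_nonneg hL)
      simp only [wronskian, W, Dfun_of_le_abs (abs_neg L ▸ (abs_of_pos hL).ge), one_mul]
      linarith
    · exact (hWV t (abs_lt.2 ⟨h, (hsub ht).2.lt_of_ne htL⟩)).le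
  have hright : ∀ t ∈ s, t ≠ -L → W t ≤ wronskian L φ ψ t := by
    intro t ht htL
    rcases (hsub ht).2.eq_or_lt with rfl | h
    · have : ψ t * sin (φ t) ≤ 0 := mul_nonpos_of_nonneg_of_nonpos (hψs _ ht) (hφ.sin_apply_nonpos hL)
      simp only [wronskian, W, Dfun_of_le_abs (abs_of_pos hL).ge, one_mul]
      linarith
    · exact (hWV t (abs_lt.2 ⟨(hsub ht).1.lt_of_ne' htL, h⟩)).ge
  intro x hx y hy hxy
  rcases hxy.eq_or_lt with rfl | hlt
  · rfl
  calc wronskian L φ ψ x ≤ W x := hleft x hx (hlt.trans_le (hsub hy).2).ne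
    _ ≤ W y := hW hx hy hxy
    _ ≤ wronskian L φ ψ y := hright y hy ((hsub hx).1.trans_lt hlt).ne'

theorem monotoneOn_wronskian (hL : 0 < L) (hφ : IsPinnedFluxon L 0 0 φ)
    (hψ : IsEigenfun L 0 0 φ Λ ψ) (hΛ : 0 ≤ Λ) {s : Set ℝ} (hs : s.OrdConnected)
    (hψs : ∀ t ∈ s, 0 ≤ ψ t) : MonotoneOn (wronskian L φ ψ) s := by
  have hcont := continuousOn_wronskian (L := L) hφ.1 hψ.2.1
  refine MonotoneOn.of_inter_Iic_of_inter_Ici (c := -L) hs ?_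
    (MonotoneOn.of_inter_Iic_of_inter_Ici (c := L) (hs.inter ordConnected_Ici) ?_ ?_)
  · refine monotoneOn_wronskian_of_interior hL.le hφ hψ hΛ (hs.inter ordConnected_Iic)
      (hcont.mono fun t ht => ?_) (fun t ht => ?_) fun t ht => hψs t ht.1
    · show L ≤ |t|
      rw [abs_of_neg (by linarith [ht.2.out])]
      linarith [ht.2.out]
    · have := interior_mono inter_subset_right ht
      rw [interior_Iic] at this
      exact ⟨this.out.ne, (this.out.trans (by linarith)).ne⟩
  · exact monotoneOn_wronskian_of_subset_Icc hL hφ hψ hΛ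
      ((hs.inter ordConnected_Ici).inter ordConnected_Iic)
      (fun t ht => ⟨ht.1.2, ht.2⟩) fun t ht => hψs t ht.1.1
  · refine monotoneOn_wronskian_of_interior hL.le hφ hψ hΛ
      ((hs.inter ordConnected_Ici).inter ordConnected_Ici)
      (hcont.mono fun t ht => ?_) (fun t ht => ?_) fun t ht => hψs t ht.1.1
    · show L ≤ |t|
      rw [abs_of_pos (by linarith [ht.2.out])]
      exact ht.2.out
    · have := interior_mono inter_subset_right ht
      rw [interior_Ici] at this
      exact ⟨((by linarith : -L < L).trans this.out).ne', this.out.ne'⟩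

theorem wronskian_eq_zero_of_pos (hL : 0 < L) (hφ : IsPinnedFluxon L 0 0 φ)
    (hψ : IsEigenfun L 0 0 φ Λ ψ) (hΛ : 0 ≤ Λ) {x : ℝ} (hx : 0 < ψ x) :
    wronskian L φ ψ x = 0 := by
  obtain ⟨-, hC, -, hbot, htop, h'bot, h'top⟩ := id hψ
  obtain ⟨-, -, -, -, hφ'bot, hφ'top⟩ := id hφ
  have hmono : ∀ a b, a ≤ b → (∀ t ∈ Icc a b, 0 ≤ ψ t) →
      wronskian L φ ψ a ≤ wronskian L φ ψ b := fun a b hab h =>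
    monotoneOn_wronskian hL hφ hψ hΛ ordConnected_Icc h (left_mem_Icc.2 hab)
      (right_mem_Icc.2 hab) hab
  have hdψ : ∀ t, HasDerivAt ψ (deriv ψ t) t := fun t =>
    (hC.differentiable one_ne_zero t).hasDerivAt
  have hφ' := hφ.deriv_pos hL.le
  apply le_antisymm
  · refine nonpos_of_pos_of_monotone_where_nonneg hC.continuous hmono (fun a b hab hb h => ?_)
      (tendsto_wronskian htop h'top hφ'top) hx
    rw [wronskian_of_eq_zero hb]
    exact mul_nonpos_of_nonpos_of_nonneg
      ((hdψ b).nonpos_of_eq_zero_of_nonneg_left hb hab h) (hφ' b).le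
  · -- the mirror image `x ↦ -x` turns the left end of a positivity interval into a right end
    have := nonpos_of_pos_of_monotone_where_nonneg (ψ := fun t => ψ (-t))
      (V := fun t => -wronskian L φ ψ (-t)) (hC.continuous.comp continuous_neg)
      (fun a b hab h => neg_le_neg <| hmono _ _ (neg_le_neg hab) fun t ht => by
        simpa using h (-t) ⟨by linarith [ht.2], by linarith [ht.1]⟩)
      (fun a b hab hb h => ?_)
      (by simpa using ((tendsto_wronskian hbot h'bot hφ'bot).comp
        tendsto_neg_atTop_atBot).neg) (x := -x) (by simpa using hx)
    · simpa using this
    have hd := (hdψ (-b)).comp b (hasDerivAt_neg b)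
    rw [neg_nonpos, wronskian_of_eq_zero hb]
    exact mul_nonneg (by linarith [hd.nonpos_of_eq_zero_of_nonneg_left hb hab h]) (hφ' _).le

end Wronskian

theorem IsEigenfun.nonpos {L Λ : ℝ} {φ ψ : ℝ → ℝ} (hψ : IsEigenfun L 0 0 φ Λ ψ) (hL : 0 < L)
    (hφ : IsPinnedFluxon L 0 0 φ) (hΛ : 0 < Λ) (x : ℝ) : ψ x ≤ 0 := by
  by_contra! hx
  have hU : IsOpen {t | 0 < ψ t} := isOpen_lt continuous_const hψ.2.1.continuous
  obtain ⟨y, hy, hyL⟩ := ((Set.toFinite {-L, L}).countable.dense_compl ℝ).inter_open_nonempty _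
    hU ⟨x, hx⟩
  obtain ⟨h₁, h₂⟩ : y ≠ -L ∧ y ≠ L := by simpa [not_or] using hyL
  have hV : HasDerivAt (wronskian L φ ψ) 0 y := by
    refine (hasDerivAt_const y (0 : ℝ)).congr_of_eventuallyEq ?_
    filter_upwards [hU.mem_nhds hy] with t ht
    exact wronskian_eq_zero_of_pos hL hφ hψ hΛ.le ht
  have := (hasDerivAt_wronskian hφ hψ h₁ h₂).unique hV
  exact (mul_pos (mul_pos hΛ hy) (hφ.deriv_pos hL.le y)).ne' this

theorem IsPinnedFluxon.not_isEigenvalue {L Λ : ℝ} {φ : ℝ → ℝ} (hφ : IsPinnedFluxon L 0 0 φ)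
    (hL : 0 < L) (hΛ : 0 < Λ) : ¬ IsEigenvalue L 0 0 φ Λ := by
  rintro ⟨ψ, hψ⟩
  refine hψ.1 (funext fun x => le_antisymm (hψ.nonpos hL hφ hΛ x) ?_)
  simpa using hψ.neg.nonpos hL hφ hΛ x

/-- For all `μ > 1`, `T ∈ (0,1)`, `y ≥ 0`, the matching equation
`−μ(μ+T) + (1−T²) = √(μ²−1)·(μ+T)·tanh y` has no solution: the left-hand side is
`≤ −T − T² < 0` while the right-hand side is `≥ 0`. Consequently, for `γ = 0` and
`d = 0`, the linearisation about the (unique) pinned fluxon with half-length `L > 0`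
has no eigenvalue `Λ > 0`. -/
theorem stmt10 :
    (∀ μ T y : ℝ, 1 < μ → T ∈ Set.Ioo (0 : ℝ) 1 → 0 ≤ y →
      (-μ * (μ + T) + (1 - T ^ 2) ≤ -T - T ^ 2 ∧
       -T - T ^ 2 < 0 ∧
       0 ≤ Real.sqrt (μ ^ 2 - 1) * (μ + T) * Real.tanh y ∧
       -μ * (μ + T) + (1 - T ^ 2) ≠ Real.sqrt (μ ^ 2 - 1) * (μ + T) * Real.tanh y)) ∧
    (∀ L : ℝ, 0 < L → ∀ φ : ℝ → ℝ, IsPinnedFluxon L 0 0 φ →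
      ∀ Λ : ℝ, IsEigenvalue L 0 0 φ Λ → ¬ 0 < Λ) := by
  exact ⟨fun μ T y hμ hT hy => matching_equation_no_solution hμ hT hy,
    fun L hL φ hφ Λ hΛφ hΛ => hφ.not_isEigenvalue hL hΛ hΛφ⟩
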